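/- Let G be a labeled block graph, let B' be a support block of G, let c_i ∈ C\{c_h} be a cut vertex of B', and let B_{ij} be an end block of G whose unique cut vertex is c_i. If l_2(B_{ij}) = 1, then γ(G) = γ(G'), where G' is the labeled block graph obtained from G by relabelling max{2 − |r(V(B_{ij}))|, 0} vertices of B_{ij} that have t-label B as R, with priority given to c_i, and keeping every other label the same. -/

import Mathlib

open SimpleGraph
open scoped Classical

/-- The two possible t-labels of a vertex of a labeled block graph. -/
inductive TLabel
  | B
  | R
deriving DecidableEq

/-- A labeled graph: a graph together with labels `M_V(v) = (t v, s v)` on vertices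
and `k e` on (potential) edges. -/
structure LBG (V : Type*) where
  graph : SimpleGraph V
  t : V → TLabel
  s : V → ℕ
  k : Sym2 V → ℕ

variable {V : Type*}

/-- closed neighbourhood `N_G[v]` -/
def cN (G : SimpleGraph V) (v : V) : Set V := insert v {u | G.Adj v u}

/-- open neighbourhood `N_G(v)` -/
def oN (G : SimpleGraph V) (v : V) : Set V := {u | G.Adj v u}

/-- closed neighbourhood `N_G[e]` of an edge -/
def eN (G : SimpleGraph V) (e : Sym2 V) : Set V := {w | ∃ x ∈ e, w ∈ cN G x}

/-- `r(S)`: the vertices of `S` with t-label `R`. -/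
def rSet (H : LBG V) (S : Set V) : Set V := {v | v ∈ S ∧ H.t v = TLabel.R}

/-- An `M_{LVE}`-dominating set of a labeled graph. -/
def IsMLVE (H : LBG V) (L : Set V) : Prop :=
  (∀ v, H.t v = TLabel.R → v ∈ L) ∧
  (∀ v, H.s v ≤ (cN H.graph v ∩ L).ncard) ∧
  (∀ e ∈ H.graph.edgeSet, H.k e ≤ (eN H.graph e ∩ L).ncard) ∧
  (∀ e ∈ H.graph.edgeSet, ∀ f ∈ H.graph.edgeSet, e ≠ f →
    H.k e + H.k f - 1 ≤ ((eN H.graph e ∪ eN H.graph f) ∩ L).ncard)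

/-- `γ(G)`: the minimum cardinality of an `M_{LVE}`-dominating set. -/
noncomputable def gam (H : LBG V) : ℕ :=
  sInf {n | ∃ L : Set V, IsMLVE H L ∧ L.ncard = n}

/-- A liar's vertex-edge dominating set. -/
def IsLiarVE (G : SimpleGraph V) (L : Set V) : Prop :=
  (∀ e ∈ G.edgeSet, 2 ≤ (eN G e ∩ L).ncard) ∧
  (∀ e ∈ G.edgeSet, ∀ f ∈ G.edgeSet, e ≠ f → 3 ≤ ((eN G e ∪ eN G f) ∩ L).ncard)

/-- `v` is a cut vertex of `G`: removing it disconnects two vertices that were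
connected in `G`. -/
def IsCutVertex (G : SimpleGraph V) (v : V) : Prop :=
  ∃ x y : {u : V // u ≠ v}, G.Reachable x.1 y.1 ∧
    ¬ (G.induce {u : V | u ≠ v}).Reachable ⟨x.1, x.2⟩ ⟨y.1, y.2⟩

/-- A vertex set inducing a connected subgraph without a cut vertex. -/
def GoodSet (G : SimpleGraph V) (Bs : Set V) : Prop :=
  (G.induce Bs).Connected ∧ ∀ v, ¬ IsCutVertex (G.induce Bs) v

/-- A block of `G`: a maximal connected subgraph without a cut vertex. -/
def IsBlock (G : SimpleGraph V) (Bs : Set V) : Prop :=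
  GoodSet G Bs ∧ ∀ Bs' : Set V, Bs ⊆ Bs' → GoodSet G Bs' → Bs' = Bs

/-- A block graph: every block is a clique. -/
def IsBlockGraph (G : SimpleGraph V) : Prop :=
  ∀ Bs : Set V, IsBlock G Bs → G.IsClique Bs

/-- `Bs` is an end block of `G` whose unique cut vertex is `c`. -/
def EndBlockWith (G : SimpleGraph V) (Bs : Set V) (c : V) : Prop :=
  IsBlock G Bs ∧ c ∈ Bs ∧ IsCutVertex G c ∧ ∀ c' ∈ Bs, IsCutVertex G c' → c' = c

/-- The cut-tree of `G`: vertices are the blocks and the cut vertices of `G`,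
with an edge joining a block to each cut vertex it contains. -/
def cutTree (G : SimpleGraph V) :
    SimpleGraph ({Bs : Set V // IsBlock G Bs} ⊕ {v : V // IsCutVertex G v}) :=
  SimpleGraph.fromRel (fun a b =>
    match a, b with
    | Sum.inl Bs, Sum.inr c => (c : V) ∈ (Bs : Set V)
    | _, _ => False)

/-- Distance to the root `ρ` (a cut vertex) in the cut-tree. -/
noncomputable def rootDist (G : SimpleGraph V) (ρ : {v : V // IsCutVertex G v})
    (x : {Bs : Set V // IsBlock G Bs} ⊕ {v : V // IsCutVertex G v}) : ℕ :=
  (cutTree G).dist x (Sum.inr ρ)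

/-- `Bi` is a descendant block of `Bj` in the cut-tree rooted at `ρ`:
`Bj` is the parent of the parent of `Bi`. -/
def IsDescBlock (G : SimpleGraph V) (ρ : {v : V // IsCutVertex G v})
    (Bj Bi : {Bs : Set V // IsBlock G Bs}) : Prop :=
  ∃ c : {v : V // IsCutVertex G v}, (c : V) ∈ (Bi : Set V) ∧ (c : V) ∈ (Bj : Set V) ∧
    rootDist G ρ (Sum.inr c) + 1 = rootDist G ρ (Sum.inl Bi) ∧
    rootDist G ρ (Sum.inl Bj) + 1 = rootDist G ρ (Sum.inr c)

/-- A support block: all of its descendant blocks are end blocks of `G`. -/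
def IsSupportBlock (G : SimpleGraph V) (ρ : {v : V // IsCutVertex G v})
    (B' : {Bs : Set V // IsBlock G Bs}) : Prop :=
  ∀ Bi, IsDescBlock G ρ B' Bi → ∃ c : V, EndBlockWith G (Bi : Set V) c

/-- The edges of (the subgraph induced by) a block `Bs`. -/
def blockEdges (G : SimpleGraph V) (Bs : Set V) : Set (Sym2 V) :=
  {e | e ∈ G.edgeSet ∧ ∀ x ∈ e, x ∈ Bs}

/-- Relabel all vertices of `A` with t-label `R`, keeping every other label the same. -/
noncomputable def relabelR (H : LBG V) (A : Set V) : LBG V :=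
  { H with t := fun v => if v ∈ A then TLabel.R else H.t v }

/-- `l_2(c)`: the number of edges of the end blocks whose unique cut vertex is `c`
that are incident to `c` and have k-label `2`. -/
noncomputable def l2cut (H : LBG V) (c : V) : ℕ :=
  ({e : Sym2 V | (∃ Bs : Set V, EndBlockWith H.graph Bs c ∧ e ∈ blockEdges H.graph Bs) ∧
     c ∈ e ∧ H.k e = 2}).ncard

/-!
In a block graph, a vertex of an end block `B` other than its cut vertex `c` has closed
neighbourhood exactly `B`. The edge of `B` avoiding `c` with k-label 2 therefore forces every
M_LVE-dominating set `L` to contain at least two, hence at least `|A| + |r(B)|`, vertices of `B`.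
Swapping the vertices of `(B ∩ L) \ (A ∪ r(B))` for the missing vertices of `A` gives a
dominating set of the relabelled graph of the same size, because every neighbourhood containing
a swapped-out vertex contains all of `B`. Conversely, relabelling only adds constraints.
-/

namespace SimpleGraph

variable {G : SimpleGraph V}

lemma preconnected_of_forall_adj {m : V} (h : ∀ x, x ≠ m → G.Adj x m) : G.Preconnected := by
  have hm : ∀ x, G.Reachable x m := fun x => by
    by_cases hx : x = m
    · exact hx ▸ Reachable.refl x
    · exact (h x hx).reachable
  exact fun x y => (hm x).trans (hm y).symm

lemma not_isCutVertex_induce {S : Set V} {z : S} (h : (G.induce (S \ {z.1})).Connected) :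
    ¬ IsCutVertex (G.induce S) z := by
  rintro ⟨x, y, -, hxy⟩
  let f : G.induce (S \ {z.1}) →g (G.induce S).induce {u | u ≠ z} :=
    ⟨fun u => ⟨⟨u.1, u.2.1⟩, fun h => u.2.2 (congrArg Subtype.val h)⟩, fun h => h⟩
  refine hxy ((h.preconnected ⟨x.1.1, x.1.2, fun h => x.2 (Subtype.ext h)⟩
    ⟨y.1.1, y.1.2, fun h => y.2 (Subtype.ext h)⟩).map f)

lemma goodSet_of_adj_pair {S : Set V} {v w : V} (hv : v ∈ S) (hw : w ∈ S) (hvw : v ≠ w)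
    (hadj : ∀ x ∈ S, ∀ m ∈ ({v, w} : Set V), x ≠ m → G.Adj x m) : GoodSet G S := by
  refine ⟨(connected_iff _).mpr ⟨preconnected_of_forall_adj (m := ⟨v, hv⟩) fun x hx =>
      hadj x x.2 v (by simp) fun h => hx (Subtype.ext h), ⟨⟨v, hv⟩⟩⟩, ?_⟩
  rintro z ⟨x, y, -, hxy⟩
  obtain ⟨m, hmvw, hmS, hmz⟩ : ∃ m ∈ ({v, w} : Set V), ∃ hm : m ∈ S, (⟨m, hm⟩ : S) ≠ z := by
    by_cases hz : (⟨v, hv⟩ : S) = z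
    · exact ⟨w, by simp, hw, fun h => hvw (congrArg Subtype.val (hz.trans h.symm))⟩
    · exact ⟨v, by simp, hv, hz⟩
  exact hxy (preconnected_of_forall_adj (m := ⟨⟨m, hmS⟩, hmz⟩)
    (fun u hu => hadj u.1.1 u.1.2 m hmvw fun h => hu (Subtype.ext (Subtype.ext h))) _ _)

lemma Walk.IsCycle.connected_induce_support_sdiff_start {z : V} {c : G.Walk z z}
    (hc : c.IsCycle) : (G.induce ({x | x ∈ c.support} \ {z})).Connected := by
  have hc₁ : ¬ c.Nil := hc.not_nil
  have hc₂ : ¬ c.tail.Nil := by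
    rw [Walk.not_nil_iff_lt_length, Walk.length_tail]
    have := hc.three_le_length
    omega
  have hsupp := Walk.support_dropLast_concat hc₂
  have hz : z ∉ c.tail.dropLast.support := by
    have hnd : c.tail.support.Nodup := by
      rw [Walk.support_tail_of_not_nil _ hc₁]
      exact hc.support_nodup
    rw [← hsupp, List.nodup_append] at hnd
    exact fun h => hnd.2.2 z h z (List.mem_singleton_self z) rfl
  have hset : {x | x ∈ c.support} \ {z} = {x | x ∈ c.tail.dropLast.support} := by
    ext x
    rw [← Walk.cons_support_tail hc₁, ← hsupp]
    simp only [Set.mem_sdiff, Set.mem_ofPred_eq, List.mem_cons, List.mem_append,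
      Set.mem_singleton_iff]
    grind
  rw [hset]
  exact c.tail.dropLast.connected_induce_support

lemma Walk.IsCycle.goodSet_support {v : V} {c : G.Walk v v} (hc : c.IsCycle) :
    GoodSet G {x | x ∈ c.support} := by
  refine ⟨c.connected_induce_support, fun z => not_isCutVertex_induce ?_⟩
  have hrot := (hc.rotate z.2).connected_induce_support_sdiff_start
  rwa [show {x | x ∈ (c.rotate z z.2).support} = {x | x ∈ c.support} from
    Set.ext fun x => c.mem_support_rotate_iff z z.2] at hrot

end SimpleGraph

section BlockGraph

variable {G : SimpleGraph V}

lemma exists_isBlock_superset [Finite V] {S : Set V} (hS : GoodSet G S) :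
    ∃ B, IsBlock G B ∧ S ⊆ B := by
  obtain ⟨B, ⟨hSB, hB⟩, hmax⟩ := Set.Finite.exists_maximalFor Set.ncard
    {T : Set V | S ⊆ T ∧ GoodSet G T} (Set.toFinite _) ⟨S, subset_rfl, hS⟩
  refine ⟨B, ⟨hB, fun T hBT hT => ?_⟩, hSB⟩
  exact (Set.eq_of_subset_of_ncard_le hBT
    (hmax ⟨hSB.trans hBT, hT⟩ (Set.ncard_le_ncard hBT))).symm

/-- `B` and a block containing `S` are cliques sharing two vertices, so their union is
2-connected and, by maximality, equal to `B`. -/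
lemma IsBlock.subset_of_goodSet [Finite V] (hBG : IsBlockGraph G) {B S : Set V}
    (hB : IsBlock G B) (hS : GoodSet G S) {v w : V} (hv : v ∈ B ∩ S) (hw : w ∈ B ∩ S)
    (hvw : v ≠ w) : S ⊆ B := by
  obtain ⟨B₂, hB₂, hSB₂⟩ := exists_isBlock_superset hS
  have hunion : GoodSet G (B ∪ B₂) := by
    refine goodSet_of_adj_pair (Or.inl hv.1) (Or.inl hw.1) hvw ?_
    rintro x (hx | hx) m hm hxm
    · exact hBG B hB hx (by rcases hm with rfl | rfl; exacts [hv.1, hw.1]) hxm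
    · exact hBG B₂ hB₂ hx (by rcases hm with rfl | rfl; exacts [hSB₂ hv.2, hSB₂ hw.2]) hxm
  rw [← hB.2 _ Set.subset_union_left hunion]
  exact hSB₂.trans Set.subset_union_right

/-- Otherwise `v`, not being a cut vertex, lies on a cycle through `u` and `c`, which
`IsBlock.subset_of_goodSet` puts inside `B`. -/
lemma EndBlockWith.mem_of_adj [Finite V] (hBG : IsBlockGraph G) {B : Set V} {c : V}
    (hEnd : EndBlockWith G B c) {v u : V} (hv : v ∈ B) (hvc : v ≠ c) (hvu : G.Adj v u) :
    u ∈ B := by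
  obtain ⟨hB, hc, -, honly⟩ := hEnd
  have hvc' : G.Adj c v := hBG B hB hc hv hvc.symm
  by_contra hu
  have huc : u ≠ c := fun h => hu (h ▸ hc)
  have hreach : (G.induce {x | x ≠ v}).Reachable ⟨u, hvu.ne'⟩ ⟨c, hvc.symm⟩ := by
    by_contra h
    exact hvc (honly v hv ⟨⟨u, hvu.ne'⟩, ⟨c, hvc.symm⟩, hvu.symm.reachable.trans
      hvc'.symm.reachable, h⟩)
  obtain ⟨p, hp⟩ := hreach.exists_isPath
  let q : G.Walk u c := p.map (Embedding.induce {x | x ≠ v}).toHom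
  have hvq : v ∉ q.support := fun h => by
    have h' : v ∈ (p.map (Embedding.induce {x | x ≠ v}).toHom).support := h
    obtain ⟨x, -, hx⟩ := List.mem_map.mp (Walk.support_map _ p ▸ h')
    exact x.2 hx
  have hq : (Walk.cons hvu q).IsPath :=
    (Walk.cons_isPath_iff _ _).mpr ⟨hp.map Subtype.val_injective, hvq⟩
  have hcycle : (Walk.cons hvc' (Walk.cons hvu q)).IsCycle := by
    refine Path.cons_isCycle ⟨_, hq⟩ hvc' ?_
    simp only [Walk.edges_cons, List.mem_cons, Sym2.eq, Sym2.rel_iff', Prod.mk.injEq, not_or]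
    exact ⟨⟨fun h => hvc h.1.symm, fun h => huc (congrArg Prod.fst h).symm⟩,
      fun h => hvq (q.snd_mem_support_of_mem_edges h)⟩
  refine hu (hB.subset_of_goodSet hBG hcycle.goodSet_support ⟨hv, ?_⟩ ⟨hc, ?_⟩ hvc ?_) <;>
    simp

lemma mem_cN_comm {u v : V} : u ∈ cN G v ↔ v ∈ cN G u := by
  simp only [cN, Set.mem_insert_iff, Set.mem_ofPred_eq, adj_comm, eq_comm]

lemma SimpleGraph.IsClique.subset_cN {B : Set V} (hB : G.IsClique B) {w : V} (hw : w ∈ B) :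
    B ⊆ cN G w := fun x hx =>
  (eq_or_ne x w).elim Or.inl fun hxw => Or.inr (hB hw hx hxw.symm)

lemma EndBlockWith.cN_eq [Finite V] (hBG : IsBlockGraph G) {B : Set V} {c : V}
    (hEnd : EndBlockWith G B c) {v : V} (hv : v ∈ B) (hvc : v ≠ c) : cN G v = B := by
  refine subset_antisymm ?_ ((hBG B hEnd.1).subset_cN hv)
  rintro u (rfl | hu)
  exacts [hv, hEnd.mem_of_adj hBG hv hvc hu]

lemma EndBlockWith.subset_cN_of_mem_cN [Finite V] (hBG : IsBlockGraph G) {B : Set V} {c : V}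
    (hEnd : EndBlockWith G B c) {u w : V} (hu : u ∈ B) (huc : u ≠ c) (huw : u ∈ cN G w) :
    B ⊆ cN G w := by
  have hw : w ∈ B := hEnd.cN_eq hBG hu huc ▸ mem_cN_comm.mp huw
  exact (hBG B hEnd.1).subset_cN hw

lemma EndBlockWith.eN_eq [Finite V] (hBG : IsBlockGraph G) {B : Set V} {c : V}
    (hEnd : EndBlockWith G B c) {e : Sym2 V} (he : e ∈ blockEdges G B) (hce : c ∉ e) :
    eN G e = B := by
  have hcN : ∀ x ∈ e, cN G x = B := fun x hx =>
    hEnd.cN_eq hBG (he.2 x hx) fun h => hce (h ▸ hx)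
  ext w
  constructor
  · rintro ⟨x, hx, hw⟩
    exact hcN x hx ▸ hw
  · exact fun hw => ⟨e.out.1, e.out_fst_mem, (hcN _ e.out_fst_mem).symm ▸ hw⟩

end BlockGraph

section Exchange

variable [Finite V]

lemma ncard_sdiff_union_eq {L R D : Set V} (hRL : R ⊆ L) (hDL : Disjoint D L)
    (hcard : R.ncard = D.ncard) : (L \ R ∪ D).ncard = L.ncard := by
  rw [Set.ncard_union_eq (hDL.mono_right Set.sdiff_subset).symm]
  have := Set.ncard_sdiff_add_ncard_of_subset hRL
  omega

lemma ncard_inter_le_ncard_inter_sdiff_union {S K L R D : Set V} (hRL : R ⊆ L) (hRK : R ⊆ K)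
    (hDK : D ⊆ K) (hDL : Disjoint D L) (hcard : R.ncard = D.ncard)
    (hS : ∀ u ∈ R, u ∈ S → K ⊆ S) : (S ∩ L).ncard ≤ (S ∩ (L \ R ∪ D)).ncard := by
  by_cases hRS : ∃ u ∈ R, u ∈ S
  · obtain ⟨u, hu, huS⟩ := hRS
    have hKS := hS u hu huS
    have hset : S ∩ (L \ R ∪ D) = (S ∩ L) \ R ∪ D := by
      ext x
      have := @hKS x
      have := @hDK x
      simp only [Set.mem_inter_iff, Set.mem_union, Set.mem_sdiff]
      tauto
    rw [hset, ncard_sdiff_union_eq (show R ⊆ S ∩ L from fun x hx => ⟨hKS (hRK hx), hRL hx⟩)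
      (hDL.mono_right Set.inter_subset_right) hcard]
  · push Not at hRS
    exact Set.ncard_le_ncard fun x ⟨hxS, hxL⟩ => ⟨hxS, Or.inl ⟨hxL, fun hxR => hRS x hxR hxS⟩⟩

lemma ncard_sdiff_le_ncard_sdiff_union {A P M L : Set V} (hML : M ⊆ L)
    (hcard : A.ncard + P.ncard ≤ M.ncard) : (A \ L).ncard ≤ (M \ (A ∪ P)).ncard := by
  have h₁ := Set.ncard_inter_add_ncard_sdiff_eq_ncard M (A ∪ P)
  have h₂ : (M ∩ (A ∪ P)).ncard ≤ (A ∩ M).ncard + P.ncard :=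
    (Set.ncard_le_ncard (show M ∩ (A ∪ P) ⊆ (A ∩ M) ∪ P from
      fun x ⟨hxM, hx⟩ => hx.imp_left fun hxA => ⟨hxA, hxM⟩)).trans (Set.ncard_union_le _ _)
  have h₃ := Set.ncard_inter_add_ncard_sdiff_eq_ncard A L
  have h₄ : (A ∩ M).ncard ≤ (A ∩ L).ncard := Set.ncard_le_ncard (Set.inter_subset_inter_right A hML)
  omega

end Exchange

lemma IsMLVE.of_relabelR {H : LBG V} {A L : Set V} (h : IsMLVE (relabelR H A) L) :
    IsMLVE H L := by
  refine ⟨fun v hv => h.1 v ?_, h.2⟩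
  change (if v ∈ A then TLabel.R else H.t v) = TLabel.R
  split_ifs <;> simp [hv]

lemma gam_eq_of_forall_isMLVE {H H' : LBG V} (h₁ : ∀ L, IsMLVE H' L → IsMLVE H L)
    (h₂ : ∀ L, IsMLVE H L → ∃ L', IsMLVE H' L' ∧ L'.ncard ≤ L.ncard) : gam H = gam H' := by
  unfold gam
  set S := {n | ∃ L : Set V, IsMLVE H L ∧ L.ncard = n}
  set S' := {n | ∃ L : Set V, IsMLVE H' L ∧ L.ncard = n}
  have hS'S : S' ⊆ S := fun n ⟨L, hL, hn⟩ => ⟨L, h₁ L hL, hn⟩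
  rcases S.eq_empty_or_nonempty with hS | hS
  · rw [hS] at hS'S ⊢
    rw [Set.subset_empty_iff.mp hS'S]
  obtain ⟨L, hL, hLS⟩ := Nat.sInf_mem hS
  obtain ⟨L', hL', hle⟩ := h₂ L hL
  have hS' : S'.Nonempty := ⟨_, L', hL', rfl⟩
  refine le_antisymm (Nat.sInf_le (hS'S (Nat.sInf_mem hS'))) ?_
  calc sInf S' ≤ L'.ncard := Nat.sInf_le ⟨L', hL', rfl⟩
    _ ≤ L.ncard := hle
    _ = sInf S := hLS

/-- The vertices of `K ∩ L` outside `A ∪ r(K)` (hence different from `c`) are swapped for the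
missing vertices of `A`; a constraint that loses one of them contains all of `K` and so gains
them all. -/
lemma IsMLVE.exists_relabelR [Finite V] {H : LBG V} {K A L : Set V} {c : V} (hL : IsMLVE H L)
    (hK : ∀ u ∈ K, u ≠ c → ∀ w, u ∈ cN H.graph w → K ⊆ cN H.graph w)
    (hA : A ⊆ {v | v ∈ K ∧ H.t v = TLabel.B}) (hc : A.Nonempty → c ∈ A ∪ rSet H K)
    (hcard : A.ncard + (rSet H K).ncard ≤ (K ∩ L).ncard) :
    ∃ L', IsMLVE (relabelR H A) L' ∧ L'.ncard = L.ncard := by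
  obtain ⟨hLR, hLs, hLe, hLee⟩ := hL
  obtain ⟨R, hR, hRcard⟩ :=
    Set.exists_subset_card_eq (ncard_sdiff_le_ncard_sdiff_union Set.inter_subset_right hcard)
  have hRL : R ⊆ L := fun u hu => (hR hu).1.2
  have hRK : R ⊆ K := fun u hu => (hR hu).1.1
  have hRA : ∀ u ∈ R, u ∉ A := fun u hu hA => (hR hu).2 (Or.inl hA)
  have hRt : ∀ u ∈ R, H.t u = TLabel.B := fun u hu => by
    cases ht : H.t u
    · rfl
    · exact absurd (Or.inr ⟨hRK hu, ht⟩) (hR hu).2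
  have hRc : ∀ u ∈ R, u ≠ c := by
    rintro u hu rfl
    have hD : (A \ L).Nonempty := Set.nonempty_of_ncard_ne_zero
      (hRcard ▸ ((Set.ncard_pos (Set.toFinite R)).mpr ⟨u, hu⟩).ne')
    exact (hR hu).2 (hc (hD.mono Set.sdiff_subset))
  have hN : ∀ w, ∀ u ∈ R, u ∈ cN H.graph w → K ⊆ cN H.graph w :=
    fun w u hu => hK u (hRK hu) (hRc u hu) w
  have hE : ∀ e, ∀ u ∈ R, u ∈ eN H.graph e → K ⊆ eN H.graph e :=
    fun e u hu ⟨x, hxe, hux⟩ _ hv => ⟨x, hxe, hN x u hu hux hv⟩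
  have hswap : ∀ S, (∀ u ∈ R, u ∈ S → K ⊆ S) → (S ∩ L).ncard ≤ (S ∩ (L \ R ∪ A \ L)).ncard :=
    fun S => ncard_inter_le_ncard_inter_sdiff_union hRL hRK (fun v hv => (hA hv.1).1)
      Set.disjoint_sdiff_left hRcard
  refine ⟨L \ R ∪ A \ L, ⟨fun v hv => ?_, fun v => (hLs v).trans (hswap _ (hN v)),
    fun e he => (hLe e he).trans (hswap _ (hE e)),
    fun e he f hf hef => (hLee e he f hf hef).trans (hswap _ ?_)⟩,
    ncard_sdiff_union_eq hRL Set.disjoint_sdiff_left hRcard⟩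
  · change (if v ∈ A then TLabel.R else H.t v) = TLabel.R at hv
    by_cases hvA : v ∈ A
    · by_cases hvL : v ∈ L
      exacts [Or.inl ⟨hvL, fun hvR => hRA v hvR hvA⟩, Or.inr ⟨hvA, hvL⟩]
    · rw [if_neg hvA] at hv
      exact Or.inl ⟨hLR v hv, fun hvR => by simp [hRt v hvR] at hv⟩
  · rintro u hu (h | h)
    exacts [(hE e u hu h).trans Set.subset_union_left, (hE f u hu h).trans Set.subset_union_right]

theorem stmt_1_general
    {V : Type*} [Fintype V]
    (H : LBG V)
    (hBG : IsBlockGraph H.graph)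
    (ci : V)
    (Bij : Set V) (hEnd : EndBlockWith H.graph Bij ci)
    (hl2 : ({e : Sym2 V | e ∈ blockEdges H.graph Bij ∧ ci ∉ e ∧ H.k e = 2}).ncard = 1)
    (A : Set V)
    (hAsub : A ⊆ {v | v ∈ Bij ∧ H.t v = TLabel.B})
    (hAcard : A.ncard = 2 - (rSet H Bij).ncard)
    (hApri : H.t ci = TLabel.B → A.Nonempty → ci ∈ A) :
    gam H = gam (relabelR H A) := by
  obtain ⟨e, he, hce, hke⟩ := Set.nonempty_of_ncard_ne_zero (hl2 ▸ one_ne_zero)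
  have hc : A.Nonempty → ci ∈ A ∪ rSet H Bij := fun hA => by
    cases ht : H.t ci
    exacts [Or.inl (hApri ht hA), Or.inr ⟨hEnd.2.1, ht⟩]
  refine gam_eq_of_forall_isMLVE (fun L => IsMLVE.of_relabelR) fun L hL => ?_
  have h₂ : 2 ≤ (Bij ∩ L).ncard := hEnd.eN_eq hBG he hce ▸ hke ▸ hL.2.2.1 e he.1
  have hr : (rSet H Bij).ncard ≤ (Bij ∩ L).ncard :=
    Set.ncard_le_ncard fun v hv => ⟨hv.1, hL.1 v hv.2⟩
  obtain ⟨L', hL', hcard⟩ := hL.exists_relabelR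
    (fun u hu huc w => hEnd.subset_cN_of_mem_cN hBG hu huc) hAsub hc (by omega)
  exact ⟨L', hL', hcard.le⟩

theorem stmt_1
    {V : Type*} [Fintype V] [DecidableEq V]
    (H : LBG V)
    (hBG : IsBlockGraph H.graph)
    (hk : ∀ e : Sym2 V, H.k e ≤ 2)
    (ρ : {v : V // IsCutVertex H.graph v})
    (B' : {Bs : Set V // IsBlock H.graph Bs})
    (hsupp : IsSupportBlock H.graph ρ B')
    (ch : V) (hchCut : IsCutVertex H.graph ch) (hchB : ch ∈ (B' : Set V))
    (hchMin : ∀ (c : V) (hc : IsCutVertex H.graph c), c ∈ (B' : Set V) →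
      rootDist H.graph ρ (Sum.inr ⟨ch, hchCut⟩) ≤ rootDist H.graph ρ (Sum.inr ⟨c, hc⟩))
    (ci : V) (hciCut : IsCutVertex H.graph ci) (hciB : ci ∈ (B' : Set V)) (hcich : ci ≠ ch)
    (Bij : Set V) (hEnd : EndBlockWith H.graph Bij ci)
    (hl2 : ({e : Sym2 V | e ∈ blockEdges H.graph Bij ∧ ci ∉ e ∧ H.k e = 2}).ncard = 1)
    (A : Set V)
    (hAsub : A ⊆ {v | v ∈ Bij ∧ H.t v = TLabel.B})
    (hAcard : A.ncard = 2 - (rSet H Bij).ncard)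
    (hApri : H.t ci = TLabel.B → A.Nonempty → ci ∈ A) :
    gam H = gam (relabelR H A) :=
  stmt_1_general H hBG ci Bij hEnd hl2 A hAsub hAcard hApri
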